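/- arXiv:1102.3285 — 2 statements merged into one kernel-verified Lean document; each statement's English description precedes it below -/
import Mathlib

section
/- In the transfinite ranking construction on the run DAG, if a vertex has successor-ordinal rank α+1, then there exists a finite maximal path from that vertex ending in a vertex of rank λ+1 for some limit ordinal λ with floor(α+1) ≤ λ, where floor(β) is the largest limit ordinal strictly smaller than β (for successor β) and a maximal path always steps to a maximal-rank successor. -/
open Ordinal in
/-- The transfinite sequence of DAGs: `G 0 = G0`, successor stages remove dead ends,
limit stages remove the vertices that are inert in `H λ = ⋂_{β<λ} G β`. -/
noncomputable def Gseq {V : Type*} (E : V → V → Prop) (acc : V → Prop) (G0 : Set V) :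
    Ordinal → Set V := fun o =>
  Ordinal.limitRecOn o G0
    (fun _ Gα => {v ∈ Gα | ∃ u, E v u ∧ u ∈ Gα})
    (fun o _ ih =>
      {v | (∀ β (h : β < o), v ∈ ih β h) ∧
        ∃ u, Relation.ReflTransGen (fun x y => E x y ∧ ∀ β (h : β < o), y ∈ ih β h) v u ∧
          acc u})

/-- `H α = ⋂_{β<α} G β`. -/
noncomputable def Hseq {V : Type*} (E : V → V → Prop) (acc : V → Prop) (G0 : Set V)
    (o : Ordinal) : Set V :=
  {v | ∀ β < o, v ∈ Gseq E acc G0 β}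

/-- The rank of a vertex: `sup {α < ω² | v ∈ H α}`. -/
noncomputable def rankOf {V : Type*} (E : V → V → Prop) (acc : V → Prop) (G0 : Set V)
    (v : V) : Ordinal :=
  sSup {α | α < Ordinal.omega0 * Ordinal.omega0 ∧ v ∈ Hseq E acc G0 α}

/-- `floor α`: the largest limit ordinal (0 counting as a limit) strictly below `α`. -/
noncomputable def ofloor (α : Ordinal) : Ordinal :=
  sSup {l : Ordinal | (l = 0 ∨ Order.IsSuccLimit l) ∧ l < α}

/-- Edges of the run DAG of an automaton over the word `w`. -/
def dagEdge {Q A : Type*} (Δ : Q → A → Q → Prop) (w : ℕ → A) :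
    Q × ℕ → Q × ℕ → Prop := fun v u => u.2 = v.2 + 1 ∧ Δ v.1 (w v.2) u.1

/-- The run DAG from state `q0` over word `w`: all vertices reachable from `(q0, 0)`. -/
def runDag {Q A : Type*} (Δ : Q → A → Q → Prop) (w : ℕ → A) (q0 : Q) : Set (Q × ℕ) :=
  {v | Relation.ReflTransGen (dagEdge Δ w) (q0, 0) v}

/-- A vertex of the run DAG is accepting iff its state component is accepting. -/
def dagAcc {Q : Type*} (F : Set Q) : Q × ℕ → Prop := fun v => v.1 ∈ F

/-!
A vertex of rank `γ + 2` lies in `G (γ + 1)` but not in `G (γ + 2)`: it has a successor in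
`G γ` and none in `G (γ + 1)`. Such a successor has rank exactly `γ + 1` and bounds the rank of
every other successor, so it is a maximal successor. Iterating, a maximal path descends through
the successor ranks above `floor (α + 1)` until it reaches a rank `l + 1` with `l` a limit or `0`.
The ranks in the conclusion may live in another universe than `α`; stages below `ω * ω`
transfer between universes because the construction commutes with `Ordinal.lift`.
-/

open Ordinal

section Stages

universe u v w

variable {V : Type*} {E : V → V → Prop} {acc : V → Prop} {G0 : Set V}

lemma Gseq_zero : Gseq E acc G0 (0 : Ordinal.{u}) = G0 := by
  rw [Gseq, limitRecOn_zero]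

lemma Gseq_add_one (o : Ordinal.{u}) :
    Gseq E acc G0 (o + 1) = {v ∈ Gseq E acc G0 o | ∃ u, E v u ∧ u ∈ Gseq E acc G0 o} := by
  rw [Gseq, limitRecOn_add_one]
  rfl

lemma Gseq_of_isSuccLimit {o : Ordinal.{u}} (ho : Order.IsSuccLimit o) :
    Gseq E acc G0 o = {v | v ∈ Hseq E acc G0 o ∧
      ∃ u, Relation.ReflTransGen (fun x y => E x y ∧ y ∈ Hseq E acc G0 o) v u ∧ acc u} := by
  rw [Gseq, limitRecOn_limit _ _ _ _ ho]
  rfl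

lemma Gseq_antitone : Antitone (Gseq.{_, u} E acc G0) := by
  suffices h : ∀ γ : Ordinal.{u}, ∀ β < γ, Gseq E acc G0 γ ⊆ Gseq E acc G0 β from
    antitone_iff_forall_lt.mpr fun β γ hβγ => h γ β hβγ
  intro γ
  induction γ using limitRecOn with
  | zero => exact fun β hβ => absurd hβ zero_le.not_gt
  | add_one δ ih =>
    intro β hβ
    have hstep : Gseq E acc G0 (δ + 1) ⊆ Gseq E acc G0 δ := by
      rw [Gseq_add_one]
      exact fun _ hv => hv.1
    rcases (Order.lt_add_one_iff.mp hβ).eq_or_lt with rfl | hlt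
    · exact hstep
    · exact hstep.trans (ih β hlt)
  | limit o ho _ =>
    intro β hβ v hv
    rw [Gseq_of_isSuccLimit ho] at hv
    exact hv.1 β hβ

lemma Hseq_add_one (o : Ordinal.{u}) : Hseq E acc G0 (o + 1) = Gseq E acc G0 o := by
  ext v
  exact ⟨fun hv => hv o (lt_add_one o),
    fun hv β hβ => Gseq_antitone (Order.lt_add_one_iff.mp hβ) hv⟩

lemma Hseq_lift_of_forall_lt {o : Ordinal.{u}}
    (h : ∀ β < o, Gseq E acc G0 (lift.{v} β) = Gseq E acc G0 β) :
    Hseq E acc G0 (lift.{v} o) = Hseq E acc G0 o := by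
  ext x
  constructor
  · intro hx β hβ
    rw [← h β hβ]
    exact hx _ (lift_lt.mpr hβ)
  · intro hx β hβ
    obtain ⟨β', hβ', rfl⟩ := lt_lift_iff.mp hβ
    rw [h β' hβ']
    exact hx β' hβ'

lemma Gseq_lift (o : Ordinal.{u}) : Gseq E acc G0 (lift.{v} o) = Gseq E acc G0 o := by
  induction o using limitRecOn with
  | zero => rw [lift_zero, Gseq_zero, Gseq_zero]
  | add_one δ ih => rw [lift_add, lift_one, Gseq_add_one, Gseq_add_one, ih]
  | limit o ho ih =>
    rw [Gseq_of_isSuccLimit ho, Gseq_of_isSuccLimit (isSuccLimit_lift.mpr ho),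
      Hseq_lift_of_forall_lt ih]

lemma Hseq_lift (o : Ordinal.{u}) : Hseq E acc G0 (lift.{v} o) = Hseq E acc G0 o :=
  Hseq_lift_of_forall_lt fun β _ => Gseq_lift β

lemma Gseq_eq_of_lift_eq {c : Ordinal.{u}} {c' : Ordinal.{w}} (h : lift.{u} c' = lift.{w} c) :
    Gseq E acc G0 c' = Gseq E acc G0 c :=
  calc Gseq E acc G0 c' = Gseq E acc G0 (lift.{u} c') := (Gseq_lift c').symm
    _ = Gseq E acc G0 c := by rw [h, Gseq_lift]

lemma Hseq_eq_of_lift_eq {c : Ordinal.{u}} {c' : Ordinal.{w}} (h : lift.{u} c' = lift.{w} c) :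
    Hseq E acc G0 c' = Hseq E acc G0 c :=
  calc Hseq E acc G0 c' = Hseq E acc G0 (lift.{u} c') := (Hseq_lift c').symm
    _ = Hseq E acc G0 c := by rw [h, Hseq_lift]

end Stages

lemma Ordinal.exists_lift_eq_of_lt_omega0_mul_omega0.{u, w} {c : Ordinal.{u}}
    (hc : c < ω * ω) : ∃ c' : Ordinal.{w}, c' < ω * ω ∧ lift.{u} c' = lift.{w} c := by
  have h : lift.{w} c < lift.{u} (ω * ω : Ordinal.{w}) := by
    simpa only [lift_mul, lift_omega0] using lift_lt.{w}.mpr hc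
  exact lt_lift_iff.mp h

lemma Ordinal.add_one_lt_omega0_mul_omega0 {c : Ordinal} (hc : c < ω * ω) : c + 1 < ω * ω :=
  (isSuccLimit_mul_right omega0_pos isSuccLimit_omega0).add_one_lt hc

section Rank

universe u w

variable {V : Type*} {E : V → V → Prop} {acc : V → Prop} {G0 : Set V} {x y z : V}

lemma rankSet_nonempty (x : V) :
    {α : Ordinal.{u} | α < ω * ω ∧ x ∈ Hseq E acc G0 α}.Nonempty :=
  ⟨0, mul_pos omega0_pos omega0_pos, fun _ hβ => absurd hβ zero_le.not_gt⟩

lemma rankOf_le_of_not_mem_Gseq {c : Ordinal.{u}} (hx : x ∉ Gseq E acc G0 c) :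
    rankOf E acc G0 x ≤ c :=
  csSup_le (rankSet_nonempty x) fun _ hb => not_lt.mp fun hcb => hx (hb.2 c hcb)

lemma le_rankOf_of_mem_Hseq {c : Ordinal.{u}} (hc : c < ω * ω) (hx : x ∈ Hseq E acc G0 c) :
    c ≤ rankOf E acc G0 x :=
  le_csSup ⟨ω * ω, fun _ hb => hb.1.le⟩ ⟨hc, hx⟩

lemma rankOf_eq_of_mem_Hseq_of_not_mem_Gseq {c : Ordinal.{u}} (hc : c < ω * ω)
    (hH : x ∈ Hseq E acc G0 c) (hG : x ∉ Gseq E acc G0 c) : rankOf E acc G0 x = c :=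
  (rankOf_le_of_not_mem_Gseq hG).antisymm (le_rankOf_of_mem_Hseq hc hH)

lemma mem_Gseq_of_lt_rankOf {c : Ordinal.{u}} (hx : c < rankOf E acc G0 x) :
    x ∈ Gseq E acc G0 c :=
  have ⟨_, hb, hcb⟩ := exists_lt_of_lt_csSup (rankSet_nonempty x) hx
  hb.2 c hcb

lemma not_mem_Gseq_of_rankOf_eq {c : Ordinal.{u}} (hc : c < ω * ω)
    (hx : rankOf E acc G0 x = c) : x ∉ Gseq E acc G0 c := by
  intro hG
  have h : c + 1 ≤ rankOf E acc G0 x :=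
    le_rankOf_of_mem_Hseq (add_one_lt_omega0_mul_omega0 hc) (by rwa [Hseq_add_one])
  rw [hx] at h
  exact h.not_gt (lt_add_one c)

lemma rankOf_le_rankOf_of_stage {c : Ordinal.{u}} (hc : c < ω * ω)
    (hz : z ∈ Hseq E acc G0 c) (hy : y ∉ Gseq E acc G0 c) :
    (rankOf E acc G0 y : Ordinal.{w}) ≤ rankOf E acc G0 z := by
  obtain ⟨c', hc', hlift⟩ := exists_lift_eq_of_lt_omega0_mul_omega0.{u, w} hc
  calc rankOf E acc G0 y ≤ c' := rankOf_le_of_not_mem_Gseq (Gseq_eq_of_lift_eq hlift ▸ hy)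
    _ ≤ rankOf E acc G0 z := le_rankOf_of_mem_Hseq hc' (Hseq_eq_of_lift_eq hlift ▸ hz)

lemma exists_maximal_successor_of_rankOf_eq_add_one_add_one {v : V} {γ : Ordinal.{u}}
    (hv : rankOf E acc G0 v = γ + 1 + 1) (hlt : γ + 1 + 1 < ω * ω) :
    ∃ u, E v u ∧ rankOf E acc G0 u = γ + 1 ∧
      ∀ u', E v u' → (rankOf E acc G0 u' : Ordinal.{w}) ≤ rankOf E acc G0 u := by
  have hγ : γ + 1 < ω * ω := (lt_add_one _).trans hlt
  have hvG : v ∈ Gseq E acc G0 (γ + 1) := mem_Gseq_of_lt_rankOf (hv ▸ lt_add_one _)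
  have hsucc : ∀ u', E v u' → u' ∉ Gseq E acc G0 (γ + 1) := fun u' hE hu' =>
    not_mem_Gseq_of_rankOf_eq hlt hv (by rw [Gseq_add_one]; exact ⟨hvG, u', hE, hu'⟩)
  rw [Gseq_add_one] at hvG
  obtain ⟨-, u, hE, hu⟩ := hvG
  have huH : u ∈ Hseq E acc G0 (γ + 1) := by rwa [Hseq_add_one]
  exact ⟨u, hE, rankOf_eq_of_mem_Hseq_of_not_mem_Gseq hγ huH (hsucc u hE),
    fun u' hE' => rankOf_le_rankOf_of_stage hγ huH (hsucc u' hE')⟩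

end Rank

lemma ofloor_add_one_le (a : Ordinal) : ofloor (a + 1) ≤ a :=
  csSup_le ⟨0, Or.inl rfl, zero_lt_one.trans_le le_add_self⟩
    fun _ hl => Order.lt_add_one_iff.mp hl.2

lemma ofloor_add_one_add_one_le (a : Ordinal) : ofloor (a + 1 + 1) ≤ ofloor (a + 1) := by
  refine csSup_le ⟨0, Or.inl rfl, zero_lt_one.trans_le le_add_self⟩ fun l ⟨hl, hlt⟩ => ?_
  have hne : l ≠ a + 1 := by
    rintro rfl
    exact hl.elim (add_pos_of_right zero_lt_one a).ne' (Order.not_isSuccLimit_add_one a)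
  exact le_csSup ⟨a + 1, fun _ h => h.2.le⟩ ⟨hl, (Order.lt_add_one_iff.mp hlt).lt_of_ne hne⟩

def IsMaxPath {V β : Type*} [LE β] (E : V → V → Prop) (r : V → β) (ρ : ℕ → V) (n : ℕ) : Prop :=
  ∀ i < n, E (ρ i) (ρ (i + 1)) ∧ ∀ u, E (ρ i) u → r u ≤ r (ρ (i + 1))

lemma IsMaxPath.cons {V β : Type*} [LE β] {E : V → V → Prop} {r : V → β} {ρ : ℕ → V} {n : ℕ}
    (hρ : IsMaxPath E r ρ n) {v : V} (hv : E v (ρ 0)) (hmax : ∀ u, E v u → r u ≤ r (ρ 0)) :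
    IsMaxPath E r (fun | 0 => v | i + 1 => ρ i) (n + 1)
  | 0, _ => ⟨hv, hmax⟩
  | i + 1, hi => hρ i (Nat.lt_of_succ_lt_succ hi)

universe u w in
lemma exists_isMaxPath_to_rankOf_limit_add_one {V : Type*} (E : V → V → Prop) (acc : V → Prop)
    (G0 : Set V) (α : Ordinal.{u}) (v : V) (hrk : rankOf E acc G0 v = α + 1)
    (hlt : α + 1 < ω * ω) :
    ∃ (n : ℕ) (ρ : ℕ → V), ρ 0 = v ∧
      IsMaxPath E (fun x => (rankOf E acc G0 x : Ordinal.{w})) ρ n ∧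
      ∃ l : Ordinal, (l = 0 ∨ Order.IsSuccLimit l) ∧
        rankOf E acc G0 (ρ n) = l + 1 ∧ ofloor (α + 1) ≤ l := by
  induction α using limitRecOn generalizing v with
  | zero => exact ⟨0, fun _ => v, rfl, nofun, 0, Or.inl rfl, hrk, ofloor_add_one_le 0⟩
  | limit α hα _ => exact ⟨0, fun _ => v, rfl, nofun, α, Or.inr hα, hrk, ofloor_add_one_le α⟩
  | add_one γ ih =>
    obtain ⟨u, hE, hu, hmax⟩ := exists_maximal_successor_of_rankOf_eq_add_one_add_one hrk hlt
    obtain ⟨n, ρ, rfl, hρ, l, hl, hend, hfloor⟩ := ih u hu ((lt_add_one _).trans hlt)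
    exact ⟨n + 1, _, rfl, hρ.cons hE hmax, l, hl, hend,
      (ofloor_add_one_add_one_le γ).trans hfloor⟩

open Ordinal in
theorem stmt5_general {Q A : Type*} (Δ : Q → A → Q → Prop) (w : ℕ → A)
    (F : Set Q) (q0 : Q) (v : Q × ℕ)
    (α : Ordinal)
    (hrk : rankOf (dagEdge Δ w) (dagAcc F) (runDag Δ w q0) v = α + 1)
    (hlt : α + 1 < omega0 * omega0) :
    ∃ (n : ℕ) (ρ : ℕ → Q × ℕ), ρ 0 = v ∧
      (∀ i < n, dagEdge Δ w (ρ i) (ρ (i + 1)) ∧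
        ∀ u, dagEdge Δ w (ρ i) u →
          rankOf (dagEdge Δ w) (dagAcc F) (runDag Δ w q0) u ≤
            rankOf (dagEdge Δ w) (dagAcc F) (runDag Δ w q0) (ρ (i + 1))) ∧
      ∃ l : Ordinal, (l = 0 ∨ Order.IsSuccLimit l) ∧
        rankOf (dagEdge Δ w) (dagAcc F) (runDag Δ w q0) (ρ n) = l + 1 ∧
        ofloor (α + 1) ≤ l :=
  exists_isMaxPath_to_rankOf_limit_add_one _ _ _ α v hrk hlt

open Ordinal in
/-- If a vertex has successor-ordinal rank `α + 1`, then some maximal path from it (each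
step going to a successor of maximal rank) ends in a vertex of rank `l + 1` for a limit
ordinal `l` (0 counting as a limit) with `floor (α + 1) ≤ l`. -/
theorem stmt5 {Q A : Type*} [Finite Q] (Δ : Q → A → Q → Prop) (w : ℕ → A)
    (F : Set Q) (q0 : Q) (v : Q × ℕ) (hv : v ∈ runDag Δ w q0)
    (α : Ordinal)
    (hrk : rankOf (dagEdge Δ w) (dagAcc F) (runDag Δ w q0) v = α + 1)
    (hlt : α + 1 < omega0 * omega0) :
    ∃ (n : ℕ) (ρ : ℕ → Q × ℕ), ρ 0 = v ∧
      (∀ i < n, dagEdge Δ w (ρ i) (ρ (i + 1)) ∧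
        ∀ u, dagEdge Δ w (ρ i) u →
          rankOf (dagEdge Δ w) (dagAcc F) (runDag Δ w q0) u ≤
            rankOf (dagEdge Δ w) (dagAcc F) (runDag Δ w q0) (ρ (i + 1))) ∧
      ∃ l : Ordinal, (l = 0 ∨ Order.IsSuccLimit l) ∧
        rankOf (dagEdge Δ w) (dagAcc F) (runDag Δ w q0) (ρ n) = l + 1 ∧
        ofloor (α + 1) ≤ l :=
  stmt5_general Δ w F q0 v α hrk hlt
end

section
/- If R is a jumping-safe, F-respecting preorder on the states of a Büchi automaton, and T is an appealing improving fragment of τ₀(R) (T ⊆ τ₀(R), T transitive and self-respecting, R ⊆ T), then T is jumping-safe. In particular, quotienting the automaton by the equivalence induced by T preserves the recognized ω-language. -/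
/-- Number of accepting states among the first `j` states of the finite path `π`. -/
noncomputable def pcount {Q : Type*} (F : Set Q) (π : List Q) (j : ℕ) : ℕ :=
  Nat.card {i : ℕ // i < j ∧ ∃ q ∈ π[i]?, q ∈ F}

/-- Coherence of a sequence of finite paths. -/
def Coherent {Q : Type*} (F : Set Q) (ps : ℕ → List Q) : Prop :=
  ∀ i, ∃ j h, ∀ k, h ≤ k → j < (ps k).length ∧ i ≤ pcount F (ps k) j

/-- A finite path over a prefix of the infinite word `w`. -/
def IsFinRun {Q A : Type*} (Δ : Q → A → Q → Prop) (w : ℕ → A) (π : List Q) : Prop :=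
  ∀ i, (h : i + 1 < π.length) → Δ (π[i]'(Nat.lt_of_succ_lt h)) (w i) (π[i+1]'h)

/-- An `R`-jumping path over the word `w`:
`q i  R  qF i  R  qh i  →^{w i}  q (i+1)` for every `i`. -/
def IsJumpPath {Q A : Type*} (Δ : Q → A → Q → Prop) (R : Q → Q → Prop) (w : ℕ → A)
    (q qF qh : ℕ → Q) : Prop :=
  ∀ i, R (q i) (qF i) ∧ R (qF i) (qh i) ∧ Δ (qh i) (w i) (q (i + 1))

/-- `R` is jumping-safe: for every initial `R`-jumping path over `w` there is a sequence
of initial finite (non-jumping) paths `ps 0, ps 1, ...` over prefixes of `w` with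
`last (ps i) R q i`, which is coherent whenever the jumping path is fair. -/
def JumpingSafe {Q A : Type*} (Δ : Q → A → Q → Prop) (I F : Set Q)
    (R : Q → Q → Prop) : Prop :=
  ∀ (w : ℕ → A) (q qF qh : ℕ → Q), IsJumpPath Δ R w q qF qh → q 0 ∈ I →
    ∃ ps : ℕ → List Q,
      (∀ i, IsFinRun Δ w (ps i) ∧ (∃ q0 ∈ (ps i).head?, q0 ∈ I) ∧
        ∃ l ∈ (ps i).getLast?, R l (q i)) ∧
      ((∀ n, ∃ m, n ≤ m ∧ qF m ∈ F) → Coherent F ps)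

/-- A Büchi automaton accepts `w` iff it has an initial run visiting `F` infinitely often. -/
def Accepts {S A : Type*} (Δ : S → A → S → Prop) (I F : Set S) (w : ℕ → A) : Prop :=
  ∃ ρ : ℕ → S, ρ 0 ∈ I ∧ (∀ i, Δ (ρ i) (w i) (ρ (i + 1))) ∧ ∀ n, ∃ m, n ≤ m ∧ ρ m ∈ F

/-- The equivalence induced by a relation `T`. -/
def eqvOf {Q : Type*} (T : Q → Q → Prop) : Q → Q → Prop := fun a b => T a b ∧ T b a

/-- Transitions of the quotient automaton: inherited from class members. -/
def quotTrans {Q A : Type*} (Δ : Q → A → Q → Prop) (T : Q → Q → Prop) :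
    Quot (eqvOf T) → A → Quot (eqvOf T) → Prop := fun x a y =>
  ∃ p p', Δ p a p' ∧ Quot.mk (eqvOf T) p = x ∧ Quot.mk (eqvOf T) p' = y

/-- A class is initial/accepting in the quotient iff it contains such a member. -/
def quotSet {Q : Type*} (T : Q → Q → Prop) (S : Set Q) : Set (Quot (eqvOf T)) :=
  {x | ∃ q ∈ S, Quot.mk (eqvOf T) q = x}

/-- One round of the `τ₀` game: Spoiler moves `q →^a q'`, Duplicator answers with a proxy
`sh` with `R s sh`, a transition `sh →^a s'`, such that `q ∈ F → sh ∈ F`, and the game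
continues from `(s', q')` (required to be in `X`). -/
def tau0Step {Q A : Type*} (Δ : Q → A → Q → Prop) (F : Set Q)
    (R X : Q → Q → Prop) : Q → Q → Prop := fun s q =>
  ∀ a q', Δ q a q' → ∃ sh s', R s sh ∧ Δ sh a s' ∧ (q ∈ F → sh ∈ F) ∧ X s' q'

/-- `τ₀(R)`: the greatest fixpoint of `tau0Step`, i.e. Duplicator wins the safety game. -/
def tau0 {Q A : Type*} (Δ : Q → A → Q → Prop) (F : Set Q) (R : Q → Q → Prop) :
    Q → Q → Prop := fun s q =>
  ∃ X : Q → Q → Prop, (∀ s' q', X s' q' → tau0Step Δ F R X s' q') ∧ X s q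

/-- One round of the `τ₁` game: Spoiler additionally jumps via `R` before moving. -/
def tau1Step {Q A : Type*} (Δ : Q → A → Q → Prop) (F : Set Q)
    (R X : Q → Q → Prop) : Q → Q → Prop := fun s p =>
  ∀ a ph p', R p ph → Δ ph a p' →
    ∃ sh s', R s sh ∧ Δ sh a s' ∧ (ph ∈ F → sh ∈ F) ∧ X s' p'

/-- `τ₁(R)`: the greatest fixpoint of `tau1Step`. -/
def tau1 {Q A : Type*} (Δ : Q → A → Q → Prop) (F : Set Q) (R : Q → Q → Prop) :
    Q → Q → Prop := fun s p =>
  ∃ X : Q → Q → Prop, (∀ s' p', X s' p' → tau1Step Δ F R X s' p') ∧ X s p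


section Aux

variable {Q A : Type*}

private lemma pcount_le (F : Set Q) (π : List Q) (j : ℕ) : pcount F π j ≤ j := by
  have h := Nat.card_le_card_of_injective
    (fun x : {i : ℕ // i < j ∧ ∃ q ∈ π[i]?, q ∈ F} => (⟨x.1, x.2.1⟩ : Fin j))
    (by intro a b hab; exact Subtype.ext (by simpa using congrArg Fin.val hab))
  simpa [pcount, Nat.card_eq_fintype_card] using h

private lemma exists_ge_of_infinite {s : Set ℕ} (hs : s.Infinite) (n : ℕ) :
    ∃ m ∈ s, n ≤ m := by
  by_contra h
  push_neg at h
  exact hs (Set.Finite.subset (Set.finite_lt_nat n) (fun k hk => h k hk))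

end Aux

/-- If `R` is a jumping-safe, `F`-respecting preorder and `T` is an appealing improving
fragment of `τ₀(R)` (transitive, self-respecting, with `R ⊆ T`), then `T` is
jumping-safe; in particular, quotienting by the equivalence induced by `T` preserves the
recognized ω-language. -/
theorem stmt18 {Q A : Type*} [Finite Q] (Δ : Q → A → Q → Prop) (I F : Set Q)
    (R T : Q → Q → Prop)
    (hrefl : Reflexive R) (htrans : Transitive R)
    (hF : ∀ q s, R q s → q ∈ F → s ∈ F)
    (hjs : JumpingSafe Δ I F R)
    (hTtrans : Transitive T)
    (hTsr : ∀ s q, T s q → tau0Step Δ F R T s q)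
    (hRT : ∀ s q, R s q → T s q) :
    JumpingSafe Δ I F T ∧
      ∀ w : ℕ → A, Accepts Δ I F w ↔
        Accepts (quotTrans Δ T) (quotSet T I) (quotSet T F) w := by
  classical
  have hTrefl : ∀ x, T x x := fun x => hRT _ _ (hrefl x)
  -- Part 1: T is jumping-safe
  have hTjs : JumpingSafe Δ I F T := by
    intro w q qF qh hjp hq0
    have step : ∀ i p, T p (q i) → ∃ sh p', R p sh ∧ Δ sh (w i) p' ∧
        (qF i ∈ F → sh ∈ F) ∧ T p' (q (i+1)) := by
      intro i p hp
      obtain ⟨h1, h2, h3⟩ := hjp i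
      obtain ⟨rh, r', hr1, hr2, _, hr4⟩ := hTsr _ _ h2 (w i) _ h3
      have hprh : T p rh := hTtrans (hTtrans hp h1) (hRT _ _ hr1)
      obtain ⟨sh, s', hs1, hs2, hs3, hs4⟩ := hTsr _ _ hprh (w i) _ hr2
      exact ⟨sh, s', hs1, hs2, fun hf => hs3 (hF _ _ hr1 hf), hTtrans hs4 hr4⟩
    choose sh p' hRs hΔs hFs hTs using step
    let g : ∀ i, {p : Q // T p (q i)} := fun i =>
      Nat.rec ⟨q 0, hTrefl _⟩ (fun i gi => ⟨p' i gi.1 gi.2, hTs i gi.1 gi.2⟩) i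
    have hjp' : IsJumpPath Δ R w (fun i => (g i).1)
        (fun i => sh i (g i).1 (g i).2) (fun i => sh i (g i).1 (g i).2) := by
      intro i
      exact ⟨hRs i (g i).1 (g i).2, hrefl _, hΔs i (g i).1 (g i).2⟩
    obtain ⟨ps, hps, hcoh⟩ := hjs w _ _ _ hjp' hq0
    refine ⟨ps, fun i => ⟨(hps i).1, (hps i).2.1, ?_⟩, fun hfair => hcoh ?_⟩
    · obtain ⟨l, hl, hlR⟩ := (hps i).2.2
      exact ⟨l, hl, hTtrans (hRT _ _ hlR) (g i).2⟩
    · intro n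
      obtain ⟨m, hm, hmF⟩ := hfair n
      exact ⟨m, hm, hFs m (g m).1 (g m).2 hmF⟩
  refine ⟨hTjs, fun w => ⟨?_, ?_⟩⟩
  · -- forward: original accepts → quotient accepts
    rintro ⟨ρ, hI, hΔr, hAcc⟩
    refine ⟨fun i => Quot.mk (eqvOf T) (ρ i), ⟨ρ 0, hI, rfl⟩,
      fun i => ⟨ρ i, ρ (i+1), hΔr i, rfl, rfl⟩, fun n => ?_⟩
    obtain ⟨m, hm, hmF⟩ := hAcc n
    exact ⟨m, hm, ρ m, hmF, rfl⟩
  · -- backward: quotient accepts → original accepts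
    rintro ⟨ρq, hinit, hstepq, hacc⟩
    have heqv : Equivalence (eqvOf T) :=
      ⟨fun x => ⟨hTrefl x, hTrefl x⟩, fun h => ⟨h.2, h.1⟩,
        fun h1 h2 => ⟨hTtrans h1.1 h2.1, hTtrans h2.2 h1.2⟩⟩
    have hexact : ∀ a b : Q, Quot.mk (eqvOf T) a = Quot.mk (eqvOf T) b → T a b :=
      fun a b h => ((heqv.eqvGen_iff).mp (Quot.eq.mp h)).1
    choose P P' hΔq hmk hmk' using hstepq
    obtain ⟨q0, hq0I, hq0mk⟩ := hinit
    set q : ℕ → Q := fun i => Nat.rec q0 (fun i _ => P' i) i with hq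
    have hqmk : ∀ i, Quot.mk (eqvOf T) (q i) = ρq i := by
      intro i
      cases i with
      | zero => exact hq0mk
      | succ i => exact hmk' i
    set qF : ℕ → Q := fun i =>
      if h : ∃ f ∈ F, Quot.mk (eqvOf T) f = ρq i then h.choose else q i with hqF
    have hqFmk : ∀ i, Quot.mk (eqvOf T) (qF i) = ρq i := by
      intro i
      by_cases h : ∃ f ∈ F, Quot.mk (eqvOf T) f = ρq i
      · simp only [hqF, dif_pos h]
        exact h.choose_spec.2
      · simp only [hqF, dif_neg h]
        exact hqmk i
    have hjpT : IsJumpPath Δ T w q qF P := by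
      intro i
      refine ⟨hexact _ _ ((hqmk i).trans (hqFmk i).symm),
        hexact _ _ ((hqFmk i).trans (hmk i).symm), hΔq i⟩
    obtain ⟨ps, hps, hcoh⟩ := hTjs w q qF P hjpT hq0I
    have hfair : ∀ n, ∃ m, n ≤ m ∧ qF m ∈ F := by
      intro n
      obtain ⟨m, hm, f, hfF, hfmk⟩ := hacc n
      have h : ∃ f ∈ F, Quot.mk (eqvOf T) f = ρq m := ⟨f, hfF, hfmk⟩
      refine ⟨m, hm, ?_⟩
      simp only [hqF, dif_pos h]
      exact h.choose_spec.1
    have hcoh' := hcoh hfair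
    -- König's lemma construction
    have hlen : ∀ n, ∃ h, ∀ k, h ≤ k → n < (ps k).length := by
      intro n
      obtain ⟨j, h, hjh⟩ := hcoh' n
      refine ⟨h, fun k hk => ?_⟩
      have h1 := (hjh k hk).1
      have h2 := (hjh k hk).2
      have h3 := pcount_le F (ps k) j
      omega
    have hext : ∀ L : List Q, {k | L <+: ps k}.Infinite →
        ∃ x : Q, {k | (L ++ [x]) <+: ps k}.Infinite := by
      intro L hL
      obtain ⟨h0, hh0⟩ := hlen L.length
      have hK : {k | L <+: ps k ∧ L.length < (ps k).length}.Infinite := by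
        refine (hL.diff (Set.finite_lt_nat h0)).mono ?_
        rintro k ⟨hk1, hk2⟩
        simp only [Set.mem_setOf_eq, not_lt] at hk2 ⊢
        exact ⟨hk1, hh0 k hk2⟩
      by_contra hno
      push_neg at hno
      refine hK (Set.Finite.subset
        (Set.Finite.biUnion Set.finite_univ (fun x _ => hno x)) ?_)
      rintro k ⟨hpre, hlt⟩
      refine Set.mem_biUnion (Set.mem_univ ((ps k)[L.length]'hlt)) ?_
      have htake : L = (ps k).take L.length := List.prefix_iff_eq_take.mp hpre
      have ht : (ps k).take (L.length + 1) = L ++ [(ps k)[L.length]'hlt] := by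
        rw [List.take_succ, List.getElem?_eq_getElem hlt]
        simp [← htake]
      show (L ++ [(ps k)[L.length]'hlt]) <+: ps k
      rw [← ht]
      exact List.take_prefix _ _
    have hnil : {k | ([] : List Q) <+: ps k}.Infinite := by
      have : {k | ([] : List Q) <+: ps k} = Set.univ :=
        Set.eq_univ_of_forall (fun k => List.nil_prefix)
      rw [this]
      exact Set.infinite_univ
    choose ext hextS using hext
    let g : ∀ n, {L : List Q // L.length = n ∧ {k | L <+: ps k}.Infinite} := fun n =>
      Nat.rec ⟨[], rfl, hnil⟩
        (fun n gn => ⟨gn.1 ++ [ext gn.1 gn.2.2], by simp [gn.2.1], hextS gn.1 gn.2.2⟩) n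
    set ρ : ℕ → Q := fun n => ext (g n).1 (g n).2.2 with hρdef
    have hgsucc : ∀ n, (g (n+1)).1 = (g n).1 ++ [ρ n] := fun n => rfl
    have hget : ∀ n i, i < n → (g n).1[i]? = some (ρ i) := by
      intro n
      induction n with
      | zero => intro i hi; omega
      | succ n ih =>
        intro i hi
        rw [hgsucc, List.getElem?_append]
        rcases Nat.lt_or_ge i n with h | h
        · rw [if_pos (by rw [(g n).2.1]; exact h)]
          exact ih i h
        · have hin : i = n := by omega
          rw [if_neg (by rw [(g n).2.1]; omega), (g n).2.1, hin]
          simp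
    have hps_get : ∀ n k, (g n).1 <+: ps k → ∀ i, i < n → (ps k)[i]? = some (ρ i) := by
      intro n k hpre i hi
      have hglen : (g n).1.length = n := (g n).2.1
      have hi' : i < (g n).1.length := by omega
      have hilt : i < (ps k).length := lt_of_lt_of_le hi' hpre.length_le
      have he := List.IsPrefix.getElem hpre hi'
      rw [List.getElem?_eq_getElem hilt, ← he]
      rw [← List.getElem?_eq_getElem hi']
      exact hget n i hi
    refine ⟨ρ, ?_, ?_, ?_⟩
    · -- initial
      obtain ⟨k, hk⟩ := (g 1).2.2.nonempty
      obtain ⟨_, ⟨i0, hi0h, hi0I⟩, _⟩ := hps k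
      have h0 : (ps k)[0]? = some (ρ 0) := hps_get 1 k hk 0 one_pos
      rw [List.head?_eq_getElem?, h0] at hi0h
      simp only [Option.mem_some_iff] at hi0h
      exact hi0h ▸ hi0I
    · -- transitions
      intro i
      obtain ⟨k, hk⟩ := (g (i+2)).2.2.nonempty
      have h1 := hps_get (i+2) k hk i (by omega)
      have h2 := hps_get (i+2) k hk (i+1) (by omega)
      have hlt : i + 1 < (ps k).length := by
        have := List.IsPrefix.length_le hk
        rw [(g (i+2)).2.1] at this
        omega
      have hrun := (hps k).1 i hlt
      rw [List.getElem?_eq_getElem hlt] at h2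
      rw [List.getElem?_eq_getElem (Nat.lt_of_succ_lt hlt)] at h1
      rw [Option.some_inj] at h1 h2
      rw [h1, h2] at hrun
      exact hrun
    · -- fairness
      intro n
      by_contra hno
      push_neg at hno
      obtain ⟨j, h, hjh⟩ := hcoh' (n+1)
      obtain ⟨k, hkS, hk⟩ := exists_ge_of_infinite (g j).2.2 h
      have hpc := (hjh k hk).2
      have hbound : ∀ x : {i : ℕ // i < j ∧ ∃ q ∈ (ps k)[i]?, q ∈ F}, x.1 < n := by
        rintro ⟨i, hij, qq, hq1, hq2⟩
        rw [hps_get j k hkS i hij] at hq1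
        simp only [Option.mem_some_iff] at hq1
        by_contra h'
        exact hno i (le_of_not_gt h') (hq1 ▸ hq2)
      have hle : pcount F (ps k) j ≤ n := by
        have h := Nat.card_le_card_of_injective
          (fun x : {i : ℕ // i < j ∧ ∃ q ∈ (ps k)[i]?, q ∈ F} =>
            (⟨x.1, hbound x⟩ : Fin n))
          (by intro a b hab; exact Subtype.ext (by simpa using congrArg Fin.val hab))
        simpa [pcount, Nat.card_eq_fintype_card] using h
      omega
end
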